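/- arXiv:1610.07736 — 3 statements merged into one kernel-verified Lean document; each statement's English description precedes it below -/
import Mathlib

section
/- Let q be an odd prime and α, β ∈ F_q with α² + β² = -1. Let D_0 be the 2×2 matrix [[α, β], [-β, α]], let D be the block-diagonal 2n×2n matrix diag(D_0, ..., D_0), and let L ∈ O_{2n}(q). Then the matrix G = (I_{2n} | D·L) generates a self-dual [4n, 2n] code over F_q. -/
open Matrix

/-- The Euclidean dual of a linear code `C ⊆ F^ι`. -/
def dualCode {ι : Type*} [Fintype ι] (F : Type*) [Field F] (C : Submodule F (ι → F)) :
    Submodule F (ι → F) where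
  carrier := {y | ∀ x ∈ C, ∑ i, x i * y i = 0}
  zero_mem' := by intro x hx; simp
  add_mem' := by
    intro a b ha hb x hx
    simp [mul_add, Finset.sum_add_distrib, ha x hx, hb x hx]
  smul_mem' := by
    intro c a ha x hx
    simp only [Pi.smul_apply, smul_eq_mul, Set.mem_setOf_eq]
    calc ∑ i, x i * (c * a i) = c * ∑ i, x i * a i := by
          rw [Finset.mul_sum]; exact Finset.sum_congr rfl fun i _ => by ring
      _ = 0 := by rw [ha x hx, mul_zero]

/-- The linear code generated by a matrix `G` (its row space). -/
def rowSpan {κ ι F : Type*} [Field F] (G : Matrix κ ι F) : Submodule F (ι → F) :=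
  Submodule.span F (Set.range G)

/-- for an odd prime `q`, `α² + β² = -1`, `D` the block-diagonal matrix
with `2×2` blocks `D₀ = [[α,β],[-β,α]]`, and `L ∈ O_{2n}(q)`, the matrix
`(I_{2n} | D·L)` generates a self-dual `[4n, 2n]` code. -/
theorem stmt_4 {q n : ℕ} [Fact (Nat.Prime q)] (hq : Odd q)
    (α β : ZMod q) (hαβ : α ^ 2 + β ^ 2 = -1)
    (D : Matrix (Fin 2 × Fin n) (Fin 2 × Fin n) (ZMod q))
    (hD : D = Matrix.blockDiagonal (fun _ : Fin n => !![α, β; -β, α]))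
    (L : Matrix (Fin 2 × Fin n) (Fin 2 × Fin n) (ZMod q)) (hL : L * Lᵀ = 1) :
    rowSpan (Matrix.fromCols (1 : Matrix (Fin 2 × Fin n) (Fin 2 × Fin n) (ZMod q)) (D * L)) =
      dualCode (ZMod q)
        (rowSpan (Matrix.fromCols (1 : Matrix (Fin 2 × Fin n) (Fin 2 × Fin n) (ZMod q)) (D * L))) := by
  set A : Matrix (Fin 2 × Fin n) (Fin 2 × Fin n) (ZMod q) := D * L with hAdef
  have ht : !![α, β; -β, α]ᵀ = !![α, -β; β, α] := by
    ext i j; fin_cases i <;> fin_cases j <;> rfl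
  have hD0 : !![α, β; -β, α] * !![α, β; -β, α]ᵀ = (-1 : Matrix (Fin 2) (Fin 2) (ZMod q)) := by
    rw [ht]
    ext i j
    fin_cases i <;> fin_cases j <;>
      simp [Matrix.mul_apply, Fin.sum_univ_two, Matrix.one_apply] <;>
      first
        | linear_combination hαβ
        | linear_combination -hαβ
        | ring
  have hA : A * Aᵀ = -1 := by
    have h1 : A * Aᵀ = D * (L * Lᵀ) * Dᵀ := by
      simp [hAdef, Matrix.transpose_mul, Matrix.mul_assoc]
    rw [h1, hL, Matrix.mul_one, hD, Matrix.blockDiagonal_transpose,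
      ← Matrix.blockDiagonal_mul]
    simp only [hD0]
    exact (Matrix.blockDiagonal_neg (1 : Fin n → Matrix (Fin 2) (Fin 2) (ZMod q))).trans
      (by rw [Matrix.blockDiagonal_one])
  have hA' : Aᵀ * A = -1 := by
    have h1 : A * (-Aᵀ) = 1 := by rw [Matrix.mul_neg, hA, neg_neg]
    have h2 : (-Aᵀ) * A = 1 := mul_eq_one_comm.mp h1
    rw [Matrix.neg_mul] at h2
    exact neg_eq_iff_eq_neg.mp h2
  have hmem : ∀ x, x ∈ rowSpan
      (Matrix.fromCols (1 : Matrix (Fin 2 × Fin n) (Fin 2 × Fin n) (ZMod q)) A) ↔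
      ∃ c : Fin 2 × Fin n → ZMod q, x = Sum.elim c (c ᵥ* A) := by
    intro x
    rw [rowSpan]
    change x ∈ Submodule.span _ (Set.range (Matrix.fromCols
      (1 : Matrix (Fin 2 × Fin n) (Fin 2 × Fin n) (ZMod q)) A).row) ↔ _
    rw [← range_vecMulLinear]
    constructor
    · rintro ⟨c, rfl⟩
      exact ⟨c, by simp [Matrix.vecMulLinear_apply]⟩
    · rintro ⟨c, rfl⟩
      exact ⟨c, by simp [Matrix.vecMulLinear_apply]⟩
  apply le_antisymm
  · intro y hy x hx
    obtain ⟨c, rfl⟩ := (hmem x).mp hx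
    obtain ⟨d, rfl⟩ := (hmem y).mp hy
    have key : (c ᵥ* A) ⬝ᵥ (d ᵥ* A) = -(c ⬝ᵥ d) := by
      rw [show d ᵥ* A = Aᵀ *ᵥ d from (Matrix.mulVec_transpose A d).symm,
        Matrix.dotProduct_mulVec, Matrix.vecMul_vecMul, hA, Matrix.vecMul_neg,
        Matrix.vecMul_one, neg_dotProduct]
    calc ∑ i, Sum.elim c (c ᵥ* A) i * Sum.elim d (d ᵥ* A) i
        = (∑ i, c i * d i) + ∑ j, (c ᵥ* A) j * (d ᵥ* A) j := by
          rw [Fintype.sum_sum_type]; rfl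
      _ = c ⬝ᵥ d + (c ᵥ* A) ⬝ᵥ (d ᵥ* A) := rfl
      _ = 0 := by rw [key]; ring
  · intro y hy
    set v : Fin 2 × Fin n → ZMod q := fun j => y (Sum.inr j) with hv
    have hrow : ∀ k, y (Sum.inl k) + (A *ᵥ v) k = 0 := by
      intro k
      have hk : (fun i => Matrix.fromCols
          (1 : Matrix (Fin 2 × Fin n) (Fin 2 × Fin n) (ZMod q)) A k i) ∈
          rowSpan (Matrix.fromCols
            (1 : Matrix (Fin 2 × Fin n) (Fin 2 × Fin n) (ZMod q)) A) :=
        Submodule.subset_span ⟨k, rfl⟩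
      have h := hy _ hk
      rw [Fintype.sum_sum_type] at h
      have h1 : ∑ i, Matrix.fromCols
          (1 : Matrix (Fin 2 × Fin n) (Fin 2 × Fin n) (ZMod q)) A k (Sum.inl i) *
          y (Sum.inl i) = y (Sum.inl k) := by
        simp [Matrix.fromCols, Matrix.one_apply]
      have h2 : ∑ j, Matrix.fromCols
          (1 : Matrix (Fin 2 × Fin n) (Fin 2 × Fin n) (ZMod q)) A k (Sum.inr j) *
          y (Sum.inr j) = (A *ᵥ v) k := by
        simp [Matrix.fromCols, Matrix.mulVec, dotProduct, hv]
      rw [h1, h2] at h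
      exact h
    set c : Fin 2 × Fin n → ZMod q := fun k => y (Sum.inl k) with hcdef
    have hc : c = -(A *ᵥ v) := by
      funext k
      exact eq_neg_of_add_eq_zero_left (hrow k)
    have hcv : c ᵥ* A = v := by
      rw [hc, Matrix.neg_vecMul, ← Matrix.mulVec_transpose, Matrix.mulVec_mulVec, hA',
        Matrix.neg_mulVec, Matrix.one_mulVec, neg_neg]
    rw [hmem]
    exact ⟨c, by funext i; cases i with
      | inl k => rfl
      | inr j => rw [Sum.elim_inr, hcv]⟩
end

section
/- Let q be an odd prime, α, β ∈ F_q with α² + β² = -1, and L ∈ O_n(q). Then the 2n×4n matrix G = (I_{2n} | M), where M is the 2n×2n block matrix [[αL, βL], [-βLᵀ, αLᵀ]], generates a self-dual [4n, 2n] code over F_q. -/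
open Matrix

/-- for an odd prime `q`, `α² + β² = -1`, and `L ∈ O_n(q)`, the matrix
`(I_{2n} | M)` with `M = [[αL, βL], [-βLᵀ, αLᵀ]]` generates a self-dual `[4n, 2n]` code. -/
theorem stmt_5 {q n : ℕ} [Fact (Nat.Prime q)] (hq : Odd q)
    (α β : ZMod q) (hαβ : α ^ 2 + β ^ 2 = -1)
    (L : Matrix (Fin n) (Fin n) (ZMod q)) (hL : L * Lᵀ = 1)
    (M : Matrix (Fin n ⊕ Fin n) (Fin n ⊕ Fin n) (ZMod q))
    (hM : M = Matrix.fromBlocks (α • L) (β • L) (-(β • Lᵀ)) (α • Lᵀ)) :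
    rowSpan (Matrix.fromCols (1 : Matrix (Fin n ⊕ Fin n) (Fin n ⊕ Fin n) (ZMod q)) M) =
      dualCode (ZMod q)
        (rowSpan (Matrix.fromCols (1 : Matrix (Fin n ⊕ Fin n) (Fin n ⊕ Fin n) (ZMod q)) M)) := by
  have hLtL : Lᵀ * L = 1 := mul_eq_one_comm.mp hL
  have h1 : α * α + β * β = -1 := by rw [← hαβ]; ring
  have h2 : β * β + α * α = -1 := by rw [← hαβ]; ring
  have hMMt : M * Mᵀ = -1 := by
    subst hM
    simp [Matrix.fromBlocks_transpose, Matrix.fromBlocks_multiply, Matrix.smul_mul,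
      Matrix.mul_smul, smul_smul, hL, hLtL, ← Matrix.fromBlocks_neg, ← Matrix.fromBlocks_one,
      ← add_smul, mul_comm β α, h1, h2]
    rw [Matrix.fromBlocks_neg, neg_zero]
  have hMtM : Mᵀ * M = -1 := by
    subst hM
    simp [Matrix.fromBlocks_transpose, Matrix.fromBlocks_multiply, Matrix.smul_mul,
      Matrix.mul_smul, smul_smul, hL, hLtL, ← Matrix.fromBlocks_neg, ← Matrix.fromBlocks_one,
      ← add_smul, mul_comm β α, h1, h2]
    rw [Matrix.fromBlocks_neg, neg_zero]
  set G : Matrix (Fin n ⊕ Fin n) ((Fin n ⊕ Fin n) ⊕ (Fin n ⊕ Fin n)) (ZMod q) :=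
    Matrix.fromCols 1 M with hG
  -- inner products of rows vanish
  have hGGt : G * Gᵀ = 0 := by
    rw [hG, Matrix.transpose_fromCols, Matrix.fromCols_mul_fromRows, transpose_one,
      mul_one, hMMt, add_neg_cancel]
  have hrow : ∀ a b, ∑ i, G a i * G b i = 0 := by
    intro a b
    have : ∑ i, G a i * G b i = (G * Gᵀ) a b := by simp [Matrix.mul_apply]
    rw [this, hGGt]; rfl
  have hmem : ∀ z, z ∈ rowSpan G ↔ ∃ c : (Fin n ⊕ Fin n) → ZMod q, ∑ k, c k • G k = z :=
    fun z => Submodule.mem_span_range_iff_exists_fun _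
  apply le_antisymm
  · -- C ⊆ dual
    intro z hz
    obtain ⟨d, hd⟩ := (hmem z).mp hz
    intro x hx
    obtain ⟨c, hc⟩ := (hmem x).mp hx
    have hx' : ∀ i, x i = ∑ a, c a * G a i := by
      intro i; rw [← hc]; simp [Finset.sum_apply]
    have hz' : ∀ i, z i = ∑ b, d b * G b i := by
      intro i; rw [← hd]; simp [Finset.sum_apply]
    calc ∑ i, x i * z i = ∑ i, ∑ a, ∑ b, c a * d b * (G a i * G b i) := by
          refine Finset.sum_congr rfl fun i _ => ?_
          rw [hx' i, hz' i, Finset.sum_mul_sum]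
          exact Finset.sum_congr rfl fun a _ => Finset.sum_congr rfl fun b _ => by ring
      _ = ∑ a, ∑ b, c a * d b * ∑ i, G a i * G b i := by
          rw [Finset.sum_comm]
          refine Finset.sum_congr rfl fun a _ => ?_
          rw [Finset.sum_comm]
          exact Finset.sum_congr rfl fun b _ => (Finset.mul_sum _ _ _).symm
      _ = 0 := by simp [hrow]
  · -- dual ⊆ C
    intro z hz
    have ha : ∀ a, z (Sum.inl a) + ∑ j, M a j * z (Sum.inr j) = 0 := by
      intro a
      have := hz (G a) (Submodule.subset_span (Set.mem_range_self a))
      rw [Fintype.sum_sum_type] at this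
      simpa [hG, Matrix.fromCols_apply_inl, Matrix.fromCols_apply_inr,
        Matrix.one_apply, Finset.sum_ite_eq] using this
    set x : (Fin n ⊕ Fin n) → ZMod q := fun k => z (Sum.inl k) with hxdef
    set y : (Fin n ⊕ Fin n) → ZMod q := fun j => z (Sum.inr j) with hydef
    have hx : x = -(M *ᵥ y) := by
      funext k
      have := ha k
      have hmv : (M *ᵥ y) k = ∑ j, M k j * z (Sum.inr j) := by
        simp [Matrix.mulVec, dotProduct, hydef]
      simp only [Pi.neg_apply, hmv]
      exact eq_neg_of_add_eq_zero_left this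
    have hy : Mᵀ *ᵥ x = y := by
      rw [hx, Matrix.mulVec_neg, Matrix.mulVec_mulVec, hMtM, Matrix.neg_mulVec,
        Matrix.one_mulVec, neg_neg]
    refine (hmem z).mpr ⟨x, ?_⟩
    funext i
    rw [Finset.sum_apply]
    rcases i with j | j
    · simp [hG, Matrix.fromCols_apply_inl, Matrix.one_apply, Finset.sum_ite_eq, hxdef]
    · have : ∑ k, (x k • G k) (Sum.inr j) = (Mᵀ *ᵥ x) j := by
        simp [hG, Matrix.fromCols_apply_inr, Matrix.mulVec, dotProduct,
          Matrix.transpose_apply, mul_comm]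
      rw [this, hy]
end

section
/- Let q be a prime with q ≡ 1 (mod 4), a ∈ F_q with a² = -1, and let C be a self-dual [2n, n] code over F_q with generator matrix G whose rows are g_1, ..., g_n. For any scalars λ_1, ..., λ_n ∈ F_q, the code of length 2n+2 generated by the rows (g_i, λ_i a, λ_i) for odd i and (g_i, -λ_i, λ_i a) for even i is self-orthogonal. -/
/-
The inner product of two extended rows splits as `gᵢ · gⱼ` plus the inner product of their
two-coordinate tails. The first term vanishes because `C` is self-dual. Each tail is a scalar
multiple of `(a, 1)`, since `(-λ, λa) = λa • (a, 1)` when `a² = -1`. The vector `(a, 1)` is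
isotropic, so the tails are pairwise orthogonal too.
-/

open Matrix

section

variable {κ ι F : Type*} [Fintype ι] [Field F]

theorem mem_dualCode_iff {C : Submodule F (ι → F)} {y : ι → F} :
    y ∈ dualCode F C ↔ ∀ x ∈ C, x ⬝ᵥ y = 0 :=
  Iff.rfl

theorem rowSpan_le_dualCode_iff {G : Matrix κ ι F} :
    rowSpan G ≤ dualCode F (rowSpan G) ↔ ∀ i j, G i ⬝ᵥ G j = 0 := by
  refine ⟨fun h i j => h (Submodule.subset_span ⟨j, rfl⟩) _ (Submodule.subset_span ⟨i, rfl⟩),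
    fun h => ?_⟩
  rw [rowSpan, Submodule.span_le]
  rintro _ ⟨j, rfl⟩
  rw [SetLike.mem_coe, mem_dualCode_iff]
  intro x hx
  induction hx using Submodule.span_induction with
  | mem x hx => obtain ⟨i, rfl⟩ := hx; exact h i j
  | zero => exact zero_dotProduct _
  | add x y _ _ hx hy => rw [add_dotProduct, hx, hy, add_zero]
  | smul c x _ hx => rw [smul_dotProduct, hx, smul_zero]

end

theorem sum_elim_dotProduct_sum_elim {ι₁ ι₂ R : Type*} [Fintype ι₁] [Fintype ι₂]
    [NonUnitalNonAssocSemiring R] (u u' : ι₁ → R) (v v' : ι₂ → R) :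
    Sum.elim u v ⬝ᵥ Sum.elim u' v' = u ⬝ᵥ u' + v ⬝ᵥ v' :=
  Fintype.sum_sum_type _

section

variable {F : Type*} [CommRing F] {a : F}

theorem dotProduct_self_eq_zero_of_sq_eq_neg_one (ha : a ^ 2 = -1) : ![a, 1] ⬝ᵥ ![a, 1] = 0 := by
  simp only [dotProduct, Fin.sum_univ_two, cons_val_zero, cons_val_one]
  linear_combination ha

theorem ite_tail_eq_smul (ha : a ^ 2 = -1) (l : F) (p : Prop) [Decidable p] :
    (if p then ![l * a, l] else ![-l, l * a]) = (if p then l else l * a) • ![a, 1] := by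
  split_ifs
  · simp
  · ext k
    fin_cases k
    · simp only [Fin.zero_eta, Fin.isValue, cons_val_zero, Pi.smul_apply, smul_eq_mul]
      linear_combination -l * ha
    · simp

theorem ite_tail_dotProduct_ite_tail (ha : a ^ 2 = -1) (l l' : F) (p p' : Prop)
    [Decidable p] [Decidable p'] :
    (if p then ![l * a, l] else ![-l, l * a]) ⬝ᵥ (if p' then ![l' * a, l'] else ![-l', l' * a])
      = 0 := by
  rw [ite_tail_eq_smul ha, ite_tail_eq_smul ha, smul_dotProduct, dotProduct_smul,
    dotProduct_self_eq_zero_of_sq_eq_neg_one ha, smul_zero, smul_zero]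

end

theorem stmt_8_general {q n : ℕ} [Fact (Nat.Prime q)]
    (a : ZMod q) (ha : a ^ 2 = -1)
    (G : Matrix (Fin n) (Fin (2 * n)) (ZMod q))
    (hsd : rowSpan G = dualCode (ZMod q) (rowSpan G))
    (lam : Fin n → ZMod q)
    (G' : Matrix (Fin n) (Fin (2 * n) ⊕ Fin 2) (ZMod q))
    (hG' : ∀ i, G' i = Sum.elim (G i)
      (if Even i.val then ![lam i * a, lam i] else ![-(lam i), lam i * a])) :
    rowSpan G' ≤ dualCode (ZMod q) (rowSpan G') := by
  have hG : ∀ i j, G i ⬝ᵥ G j = 0 := rowSpan_le_dualCode_iff.mp hsd.le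
  refine rowSpan_le_dualCode_iff.mpr fun i j => ?_
  rw [hG' i, hG' j, sum_elim_dotProduct_sum_elim, hG i j, ite_tail_dotProduct_ite_tail ha,
    add_zero]

/-- extending each row `gᵢ` of a generator matrix of a self-dual code over
`F_q` (`q ≡ 1 (mod 4)`, `a² = -1`) by `(λᵢa, λᵢ)` for odd rows and `(-λᵢ, λᵢa)` for even
rows yields a self-orthogonal code of length `2n+2`.  (Rows are numbered `1,…,n`, so the
row of index `i : Fin n` is odd-numbered iff `i.val` is even.) -/
theorem stmt_8 {q n : ℕ} [Fact (Nat.Prime q)] (hq : q % 4 = 1)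
    (a : ZMod q) (ha : a ^ 2 = -1)
    (G : Matrix (Fin n) (Fin (2 * n)) (ZMod q))
    (hsd : rowSpan G = dualCode (ZMod q) (rowSpan G))
    (lam : Fin n → ZMod q)
    (G' : Matrix (Fin n) (Fin (2 * n) ⊕ Fin 2) (ZMod q))
    (hG' : ∀ i, G' i = Sum.elim (G i)
      (if Even i.val then ![lam i * a, lam i] else ![-(lam i), lam i * a])) :
    rowSpan G' ≤ dualCode (ZMod q) (rowSpan G') :=
  stmt_8_general a ha G hsd lam G' hG'
end
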